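/- arXiv:2404.15929 — 13 statements merged into one kernel-verified Lean document; each statement's English description precedes it below -/
import Mathlib

section
/- In a left semibrace (G,+,·), for each x ∈ G the map L_x : G → G defined by L_x(y) = x·(x⁻¹ + y) is an endomorphism of the semigroup (G,+), i.e., L_x(y+z) = L_x(y) + L_x(z) for all y,z ∈ G. -/
/-- In a left semibrace, each `L_x(y) = x·(x⁻¹ + y)` is an endomorphism of `(G,+)`. -/
theorem stmt_3 {G : Type*} [Group G] (add : G → G → G)
    (add_assoc : ∀ x y z : G, add (add x y) z = add x (add y z))
    (left_cancel : ∀ x y z : G, add x y = add x z → y = z)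
    (semibrace : ∀ x y z : G, x * add y z = add (x * y) (x * add x⁻¹ z))
    (x : G) :
    ∀ y z : G, x * add x⁻¹ (add y z) = add (x * add x⁻¹ y) (x * add x⁻¹ z) := by
  intro y z
  rw [← add_assoc, semibrace]
end

section
/- In a left semibrace (G,+,·), the map L : (G,·) → Map(G,G) given by L_x(y) = x·(x⁻¹+y) satisfies L_{x·y} = L_x ∘ L_y for all x,y ∈ G. -/
/-- In a left semibrace, the map `L : (G,·) → Map(G,G)`, `L_x(y) = x·(x⁻¹+y)`,
satisfies `L_{x·y} = L_x ∘ L_y`. -/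
theorem stmt_4 {G : Type*} [Group G] (add : G → G → G)
    (add_assoc : ∀ x y z : G, add (add x y) z = add x (add y z))
    (left_cancel : ∀ x y z : G, add x y = add x z → y = z)
    (semibrace : ∀ x y z : G, x * add y z = add (x * y) (x * add x⁻¹ z))
    (x y : G) :
    (fun w => (x * y) * add (x * y)⁻¹ w)
      = (fun w => x * add x⁻¹ w) ∘ (fun w => y * add y⁻¹ w) := by
  funext w
  have h := semibrace y (y⁻¹ * x⁻¹) w
  simp only [mul_inv_cancel_left] at h
  calc (x * y) * add (x * y)⁻¹ w
      = x * (y * add (y⁻¹ * x⁻¹) w) := by rw [mul_inv_rev, mul_assoc]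
    _ = x * add x⁻¹ (y * add y⁻¹ w) := by rw [h]
end

section
/- In a left skew bracoid (G,·,N,⋆,⊙), the maps γ_x(η) = (x ⊙ e_N)⁻¹ ⋆ (x ⊙ η) satisfy γ_{x·y} = γ_x ∘ γ_y for all x,y ∈ G; in particular each γ_x is an automorphism of (N,⋆). -/
/-- In a left skew bracoid, the maps `γ_x(η) = (x ⊙ e)⁻¹ ⋆ (x ⊙ η)` satisfy
`γ_{x·y} = γ_x ∘ γ_y`; in particular each `γ_x` is an automorphism of `(N,⋆)`. -/
theorem stmt_6 {G N : Type*} [Group G] [Group N] (act : G → N → N)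
    (one_act : ∀ η : N, act 1 η = η)
    (mul_act : ∀ (x y : G) (η : N), act (x * y) η = act x (act y η))
    (act_trans : ∀ η μ : N, ∃ x : G, act x η = μ)
    (bracoid : ∀ (x : G) (η μ : N),
      act x (η * μ) = act x η * (act x 1)⁻¹ * act x μ) :
    (∀ x y : G, (fun η => (act (x * y) 1)⁻¹ * act (x * y) η)
        = (fun η => (act x 1)⁻¹ * act x η) ∘ (fun η => (act y 1)⁻¹ * act y η)) ∧
    (∀ x : G, Function.Bijective (fun η => (act x 1)⁻¹ * act x η) ∧
      ∀ η μ : N, (act x 1)⁻¹ * act x (η * μ)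
        = ((act x 1)⁻¹ * act x η) * ((act x 1)⁻¹ * act x μ)) := by
  have act_inv : ∀ (x : G) (η : N), act x η⁻¹ = act x 1 * (act x η)⁻¹ * act x 1 := by
    intro x η
    have h := bracoid x η η⁻¹
    rw [mul_inv_cancel] at h
    calc act x η⁻¹ = (act x η * (act x 1)⁻¹)⁻¹ * (act x η * (act x 1)⁻¹ * act x η⁻¹) := by group
      _ = (act x η * (act x 1)⁻¹)⁻¹ * act x 1 := by rw [← h]
      _ = act x 1 * (act x η)⁻¹ * act x 1 := by group
  constructor
  · intro x y
    funext η
    simp only [Function.comp_apply, mul_act]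
    rw [bracoid x ((act y 1)⁻¹) (act y η), act_inv x (act y 1)]
    group
  · intro x
    refine ⟨⟨?_, ?_⟩, ?_⟩
    · intro a b hab
      simp only at hab
      have h : act x a = act x b := by
        have := mul_left_cancel hab; exact this
      have := congrArg (act x⁻¹) h
      rwa [← mul_act, ← mul_act, inv_mul_cancel, one_act, one_act] at this
    · intro μ
      refine ⟨act x⁻¹ (act x 1 * μ), ?_⟩
      simp only
      rw [← mul_act, mul_inv_cancel, one_act]
      group
    · intro η μ
      rw [bracoid]; group
end

section
/- Let (G,·,H,⋆,⊙) be a left skew bracoid with H a subgroup of (G,·) such that h ⊙ e = h for all h ∈ H. Define γ_x(h) = (x ⊙ e)⁻ˢᵗᵃʳ ⋆ (x ⊙ h) and λ_x(y) = γ_x(y ⊙ e) for x,y ∈ G. Then λ_{x·y} = λ_x ∘ λ_y for all x,y ∈ G. -/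
/-- The `γ`-function of a skew bracoid `(G,·,H,⋆,⊙)` containing a brace:
`γ_x(h) = (x ⊙ e)⁻ˢᵗᵃʳ ⋆ (x ⊙ h)`. Here `star` is the second group operation
on the subgroup `Hs ≤ (G,·)` and `sinv` its inversion. -/
def gammaMap {G : Type*} [Group G] {Hs : Subgroup G}
    (star : Hs → Hs → Hs) (sinv : Hs → Hs) (act : G → Hs → Hs)
    (x : G) (h : Hs) : Hs :=
  star (sinv (act x 1)) (act x h)

/-- `λ_x(y) = γ_x(y ⊙ e)`. -/
def lamMap {G : Type*} [Group G] {Hs : Subgroup G}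
    (star : Hs → Hs → Hs) (sinv : Hs → Hs) (act : G → Hs → Hs)
    (x y : G) : Hs :=
  gammaMap star sinv act x (act y 1)

/-- `ρ_y(x) = λ_x(y)⁻¹ · x · y`, computed in `(G,·)`. -/
def rhoMap {G : Type*} [Group G] {Hs : Subgroup G}
    (star : Hs → Hs → Hs) (sinv : Hs → Hs) (act : G → Hs → Hs)
    (y x : G) : G :=
  (↑(lamMap star sinv act x y) : G)⁻¹ * x * y

/-- λ_{x·y} = λ_x ∘ λ_y. -/
theorem stmt_8
    {G : Type*} [Group G] (Hs : Subgroup G)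
    (star : Hs → Hs → Hs) (sinv : Hs → Hs) (act : G → Hs → Hs)
    (star_assoc : ∀ a b c : Hs, star (star a b) c = star a (star b c))
    (one_star : ∀ a : Hs, star 1 a = a)
    (star_one : ∀ a : Hs, star a 1 = a)
    (sinv_star : ∀ a : Hs, star (sinv a) a = 1)
    (star_sinv : ∀ a : Hs, star a (sinv a) = 1)
    (one_act : ∀ h : Hs, act 1 h = h)
    (mul_act : ∀ (x y : G) (h : Hs), act (x * y) h = act x (act y h))
    (act_trans : ∀ h k : Hs, ∃ x : G, act x h = k)
    (bracoid : ∀ (x : G) (h k : Hs),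
      act x (star h k) = star (act x h) (star (sinv (act x 1)) (act x k)))
    (regular : ∀ h : Hs, act (↑h) 1 = h)
    (x y : G) :
    ∀ z : G, lamMap star sinv act (x * y) z
      = lamMap star sinv act x ↑(lamMap star sinv act y z) := by
  intro z
  set a := act x 1 with ha
  set b := act y 1 with hb
  set c := act (x * y) 1 with hc
  set d := act (x * y) (act z 1) with hd
  have hcb : act x b = c := by rw [hb, ← mul_act, hc]
  -- key fact (*)
  have hkey : star (act x (sinv b)) (star (sinv a) c) = a := by
    have h1 : act x (star (sinv b) b) = act x 1 := by rw [sinv_star]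
    rw [bracoid] at h1
    rw [hcb] at h1
    exact h1
  have hu : star (star (sinv a) (star (act x (sinv b)) (sinv a))) c = 1 := by
    rw [star_assoc, star_assoc, hkey, sinv_star]
  have huinv : star (sinv a) (star (act x (sinv b)) (sinv a)) = sinv c := by
    calc star (sinv a) (star (act x (sinv b)) (sinv a))
        = star (star (sinv a) (star (act x (sinv b)) (sinv a))) (star c (sinv c)) := by
          rw [star_sinv, star_one]
      _ = star (star (star (sinv a) (star (act x (sinv b)) (sinv a))) c) (sinv c) := by
          simp only [star_assoc]
      _ = sinv c := by rw [hu, one_star]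
  show star (sinv c) d
      = star (sinv a) (act x (act (↑(star (sinv b) (act y (act z 1)))) 1))
  rw [regular, bracoid, ← mul_act, ← hd, ← ha, ← huinv]
  simp only [star_assoc]
end

section
/- Let (G,·,H,⋆,⊙) be a left skew bracoid containing a brace, with λ_x(y) = γ_x(y ⊙ e) where γ_x(h) = (x ⊙ e)⁻ˢᵗᵃʳ ⋆ (x ⊙ h), and define ρ_y(x) = λ_x(y)⁻¹·x·y for x,y ∈ G. Then ρ_{x·y} = ρ_y ∘ ρ_x for all x,y ∈ G. -/
/-- ρ_{x·y} = ρ_y ∘ ρ_x. -/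
theorem stmt_9
    {G : Type*} [Group G] (Hs : Subgroup G)
    (star : Hs → Hs → Hs) (sinv : Hs → Hs) (act : G → Hs → Hs)
    (star_assoc : ∀ a b c : Hs, star (star a b) c = star a (star b c))
    (one_star : ∀ a : Hs, star 1 a = a)
    (star_one : ∀ a : Hs, star a 1 = a)
    (sinv_star : ∀ a : Hs, star (sinv a) a = 1)
    (star_sinv : ∀ a : Hs, star a (sinv a) = 1)
    (one_act : ∀ h : Hs, act 1 h = h)
    (mul_act : ∀ (x y : G) (h : Hs), act (x * y) h = act x (act y h))
    (act_trans : ∀ h k : Hs, ∃ x : G, act x h = k)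
    (bracoid : ∀ (x : G) (h k : Hs),
      act x (star h k) = star (act x h) (star (sinv (act x 1)) (act x k)))
    (regular : ∀ h : Hs, act (↑h) 1 = h)
    (x y : G) :
    ∀ z : G, rhoMap star sinv act (x * y) z
      = rhoMap star sinv act y (rhoMap star sinv act x z) := by
  -- the G-multiplication on Hs agrees with the action
  have L1 : ∀ h k : Hs, act (↑h) k = h * k := by
    intro h k
    have h1 := regular (h * k)
    rw [Subgroup.coe_mul, mul_act, regular k] at h1
    exact h1
  have act_inv' : ∀ (g : G) (h : Hs), act g (act g⁻¹ h) = h := by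
    intro g h
    rw [← mul_act, mul_inv_cancel, one_act]
  -- action of an element on a star-inverse
  have act_sinv : ∀ (g : G) (h : Hs),
      act g (sinv h) = star (act g 1) (star (sinv (act g h)) (act g 1)) := by
    intro g h
    have h1 := bracoid g h (sinv h)
    rw [star_sinv h] at h1
    -- h1 : act g 1 = star (act g h) (star (sinv (act g 1)) (act g (sinv h)))
    have h2 : star (sinv (act g h)) (act g 1)
        = star (sinv (act g 1)) (act g (sinv h)) := by
      conv_lhs => rw [h1]
      rw [← star_assoc, sinv_star, one_star]
    have h3 : star (act g 1) (star (sinv (act g h)) (act g 1))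
        = act g (sinv h) := by
      rw [h2, ← star_assoc, star_sinv, one_star]
    exact h3.symm
  -- the key identity: λ_z(x·y) = λ_z(x) · λ_{ρ_x(z)}(y)
  have key : ∀ z : G, lamMap star sinv act z (x * y)
      = lamMap star sinv act z x
        * lamMap star sinv act (rhoMap star sinv act x z) y := by
    intro z
    set a : Hs := lamMap star sinv act z x with ha
    have hw : rhoMap star sinv act x z = (↑a)⁻¹ * z * x := rfl
    have hact_w : ∀ h : Hs, act ((↑a)⁻¹ * z * x) h
        = act (↑a)⁻¹ (act z (act x h)) := by
      intro h; rw [mul_act, mul_act]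
    have haa : ∀ k : Hs, act (↑a) (act (↑a)⁻¹ k) = k := act_inv' (↑a)
    -- expand RHS
    rw [← L1]
    show lamMap star sinv act z (x * y)
      = act (↑a) (lamMap star sinv act ((↑a)⁻¹ * z * x) y)
    have expand : lamMap star sinv act ((↑a)⁻¹ * z * x) y
        = star (sinv (act ((↑a)⁻¹ * z * x) 1))
            (act ((↑a)⁻¹ * z * x) (act y 1)) := rfl
    rw [expand, bracoid, act_sinv, regular, hact_w, hact_w, haa, haa]
    -- now everything is expressed via B := act z (act x 1) and Z
    set B : Hs := act z (act x 1) with hB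
    set Z : Hs := act z (act x (act y 1)) with hZ
    have haB : a = star (sinv (act z 1)) B := rfl
    -- goal: lamMap z (x*y) = star (star a (star (sinv B) a)) (star (sinv a) Z)
    have step1 : star (star a (star (sinv B) a)) (star (sinv a) Z)
        = star a (star (sinv B) Z) := by
      rw [star_assoc, star_assoc, ← star_assoc a (sinv a) Z, star_sinv,
        one_star]
    rw [step1, haB, star_assoc, ← star_assoc B (sinv B) Z, star_sinv B,
      one_star]
    show lamMap star sinv act z (x * y) = star (sinv (act z 1)) Z
    unfold lamMap gammaMap
    rw [mul_act, hZ]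
  intro z
  have hkey := congrArg (fun h : Hs => (↑h : G)) (key z)
  simp only [Subgroup.coe_mul] at hkey
  show (↑(lamMap star sinv act z (x * y)) : G)⁻¹ * z * (x * y)
      = (↑(lamMap star sinv act (rhoMap star sinv act x z) y) : G)⁻¹
        * ((↑(lamMap star sinv act z x) : G)⁻¹ * z * x) * y
  rw [hkey]
  group
end

section
/- Let (G,·,H,⋆,⊙) be a left skew bracoid containing a brace, with λ and ρ as defined by λ_x(y) = (x ⊙ e)⁻ˢᵗᵃʳ ⋆ (x ⊙ (y ⊙ e)) and ρ_y(x) = λ_x(y)⁻¹·x·y. Then ρ_e = id, and for every x ∈ G the map ρ_x : G → G is a bijection with inverse ρ_{x⁻¹}. -/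
/-- ρ_e = id, and each ρ_x is a bijection with inverse ρ_{x⁻¹}. -/
theorem stmt_10
    {G : Type*} [Group G] (Hs : Subgroup G)
    (star : Hs → Hs → Hs) (sinv : Hs → Hs) (act : G → Hs → Hs)
    (star_assoc : ∀ a b c : Hs, star (star a b) c = star a (star b c))
    (one_star : ∀ a : Hs, star 1 a = a)
    (star_one : ∀ a : Hs, star a 1 = a)
    (sinv_star : ∀ a : Hs, star (sinv a) a = 1)
    (star_sinv : ∀ a : Hs, star a (sinv a) = 1)
    (one_act : ∀ h : Hs, act 1 h = h)
    (mul_act : ∀ (x y : G) (h : Hs), act (x * y) h = act x (act y h))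
    (act_trans : ∀ h k : Hs, ∃ x : G, act x h = k)
    (bracoid : ∀ (x : G) (h k : Hs),
      act x (star h k) = star (act x h) (star (sinv (act x 1)) (act x k)))
    (regular : ∀ h : Hs, act (↑h) 1 = h)
    :
    (rhoMap star sinv act (1 : G) = id) ∧
    (∀ x : G, Function.Bijective (rhoMap star sinv act x) ∧
      Function.LeftInverse (rhoMap star sinv act x⁻¹) (rhoMap star sinv act x) ∧
      Function.RightInverse (rhoMap star sinv act x⁻¹) (rhoMap star sinv act x)) := by

  -- basic consequences of the group axioms for `star`
  have cancel_left : ∀ a b c : Hs, star a b = star a c → b = c := by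
    intro a b c h
    have h2 : star (sinv a) (star a b) = star (sinv a) (star a c) := by rw [h]
    rwa [← star_assoc, ← star_assoc, sinv_star, one_star, one_star] at h2
  have sinv_unique : ∀ a b : Hs, star a b = 1 → b = sinv a := by
    intro a b h
    exact cancel_left a b (sinv a) (by rw [h, star_sinv])
  have sinv_sinv : ∀ a : Hs, sinv (sinv a) = a :=
    fun a => (sinv_unique (sinv a) a (sinv_star a)).symm
  have sinv_mul : ∀ a b : Hs, sinv (star a b) = star (sinv b) (sinv a) := by
    intro a b
    refine (sinv_unique _ _ ?_).symm
    rw [star_assoc, ← star_assoc b, star_sinv, one_star, star_sinv]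
  have act_inv' : ∀ (x : G) (h : Hs), act x (act x⁻¹ h) = h := by
    intro x h
    rw [← mul_act, mul_inv_cancel, one_act]
  have act_injective : ∀ x : G, Function.Injective (act x) := by
    intro x h k e
    have : act x⁻¹ (act x h) = act x⁻¹ (act x k) := by rw [e]
    rwa [← mul_act, ← mul_act, inv_mul_cancel, one_act, one_act] at this
  have gamma_hom : ∀ (g : G) (h k : Hs),
      star (sinv (act g 1)) (act g (star h k)) =
        star (star (sinv (act g 1)) (act g h)) (star (sinv (act g 1)) (act g k)) := by
    intro g h k
    rw [bracoid, ← star_assoc]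
  have gamma_sinv : ∀ (g : G) (h : Hs),
      star (sinv (act g 1)) (act g (sinv h)) = sinv (star (sinv (act g 1)) (act g h)) := by
    intro g h
    refine sinv_unique _ _ ?_
    rw [← gamma_hom g h (sinv h), star_sinv h]
    exact sinv_star _
  -- Claim D : γ_{a⁻¹}(sinv a) = a⁻¹
  have claimD : ∀ a : Hs,
      star (sinv (act ((a : G))⁻¹ 1)) (act ((a : G))⁻¹ (sinv a)) = a⁻¹ := by
    intro a
    apply act_injective (a : G)
    have hinv : act ((a : G)) (a⁻¹ : Hs) = 1 := by
      have := regular a⁻¹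
      rw [show ((a⁻¹ : Hs) : G) = ((a : G))⁻¹ from rfl] at this
      rw [← this, act_inv']
    rw [bracoid, act_inv', regular, hinv]
    -- compute act ↑a (sinv (act (↑a)⁻¹ 1))
    have h1 : act ((a : G)) (sinv (act ((a : G))⁻¹ 1)) = star a a := by
      have e1 : act ((a : G)) (sinv (act ((a : G))⁻¹ 1)) =
          star (act ((a : G)) 1)
            (star (sinv (act ((a : G)) 1)) (act ((a : G)) (sinv (act ((a : G))⁻¹ 1)))) := by
        rw [← star_assoc, star_sinv, one_star]
      rw [e1, gamma_sinv, act_inv', regular, star_one, sinv_sinv]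
    rw [h1, star_assoc, ← star_assoc a (sinv a), star_sinv, one_star, star_sinv]
  -- Claim C
  have claimC : ∀ u v : Hs,
      star (sinv (act ((↑(star (sinv u) v) : G))⁻¹ v)) (act ((↑(star (sinv u) v) : G))⁻¹ u)
        = (star (sinv u) v)⁻¹ := by
    intro u v
    set a : Hs := star (sinv u) v with ha
    set g : G := ((a : G))⁻¹ with hg
    have step1 : star (sinv (act g v)) (act g u)
        = star (star (sinv (act g v)) (act g 1)) (star (sinv (act g 1)) (act g u)) := by
      rw [star_assoc, ← star_assoc (act g 1), star_sinv, one_star]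
    rw [step1]
    have step2 : star (sinv (act g v)) (act g 1)
        = sinv (star (sinv (act g 1)) (act g v)) := by
      rw [sinv_mul, sinv_sinv]
    rw [step2, ← gamma_sinv, ← gamma_hom]
    have step3 : star (sinv v) u = sinv a := by
      rw [ha, sinv_mul, sinv_sinv]
    rw [step3]
    exact claimD a
  -- key cancellation lemma
  have key : ∀ x z : G, rhoMap star sinv act x⁻¹ (rhoMap star sinv act x z) = z := by
    intro x z
    show (↑(lamMap star sinv act ((↑(lamMap star sinv act z x) : G)⁻¹ * z * x) x⁻¹) : G)⁻¹ *
        ((↑(lamMap star sinv act z x) : G)⁻¹ * z * x) * x⁻¹ = z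
    set a : Hs := lamMap star sinv act z x with haa
    have ha : a = star (sinv (act z 1)) (act z (act x 1)) := rfl
    set w : G := (↑a : G)⁻¹ * z * x with hw
    have hw1 : act w 1 = act ((a : G))⁻¹ (act z (act x 1)) := by
      rw [hw, mul_act, mul_act]
    have hw2 : act w (act x⁻¹ 1) = act ((a : G))⁻¹ (act z 1) := by
      rw [← mul_act]
      have : w * x⁻¹ = (↑a : G)⁻¹ * z := by rw [hw]; group
      rw [this, mul_act]
    have hl : lamMap star sinv act w x⁻¹ = a⁻¹ := by
      show star (sinv (act w 1)) (act w (act x⁻¹ 1)) = a⁻¹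
      rw [hw1, hw2, ha]
      exact claimC (act z 1) (act z (act x 1))
    rw [hl]
    rw [show ((a⁻¹ : Hs) : G) = ((a : G))⁻¹ from rfl, hw]
    group
  refine ⟨?_, fun x => ?_⟩
  · funext z
    show (↑(lamMap star sinv act z 1) : G)⁻¹ * z * 1 = z
    have : lamMap star sinv act z 1 = 1 := by
      show star (sinv (act z 1)) (act z (act 1 1)) = 1
      rw [one_act]
      exact sinv_star _
    rw [this]
    simp
  · have h1 : Function.LeftInverse (rhoMap star sinv act x⁻¹) (rhoMap star sinv act x) :=
      key x
    have h2 : Function.RightInverse (rhoMap star sinv act x⁻¹) (rhoMap star sinv act x) := by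
      intro z
      have := key x⁻¹ z
      rwa [inv_inv] at this
    exact ⟨⟨h1.injective, h2.surjective⟩, h1, h2⟩
end

section
/- Let (G,·,H,⋆,⊙) be a left skew bracoid containing a brace, with λ_x(y) = (x ⊙ e)⁻ˢᵗᵃʳ ⋆ (x ⊙ (y ⊙ e)) and ρ_y(x) = λ_x(y)⁻¹·x·y. Then λ_x(y·z) = λ_x(y) · λ_{ρ_y(x)}(z) for all x,y,z ∈ G. -/
/-- λ_x(y·z) = λ_x(y) · λ_{ρ_y(x)}(z), the product taken in (G,·). -/
theorem stmt_11
    {G : Type*} [Group G] (Hs : Subgroup G)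
    (star : Hs → Hs → Hs) (sinv : Hs → Hs) (act : G → Hs → Hs)
    (star_assoc : ∀ a b c : Hs, star (star a b) c = star a (star b c))
    (one_star : ∀ a : Hs, star 1 a = a)
    (star_one : ∀ a : Hs, star a 1 = a)
    (sinv_star : ∀ a : Hs, star (sinv a) a = 1)
    (star_sinv : ∀ a : Hs, star a (sinv a) = 1)
    (one_act : ∀ h : Hs, act 1 h = h)
    (mul_act : ∀ (x y : G) (h : Hs), act (x * y) h = act x (act y h))
    (act_trans : ∀ h k : Hs, ∃ x : G, act x h = k)
    (bracoid : ∀ (x : G) (h k : Hs),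
      act x (star h k) = star (act x h) (star (sinv (act x 1)) (act x k)))
    (regular : ∀ h : Hs, act (↑h) 1 = h)
    (x y z : G) :
    (↑(lamMap star sinv act x (y * z)) : G)
      = ↑(lamMap star sinv act x y) * ↑(lamMap star sinv act (rhoMap star sinv act y x) z) := by

  -- basic star-group lemmas
  have cancelL : ∀ a b : Hs, star (sinv a) (star a b) = b := by
    intro a b; rw [← star_assoc, sinv_star, one_star]
  have cancelL' : ∀ a b : Hs, star a (star (sinv a) b) = b := by
    intro a b; rw [← star_assoc, star_sinv, one_star]
  have inv_unique : ∀ a b : Hs, star a b = 1 → b = sinv a := by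
    intro a b h
    calc b = star (sinv a) (star a b) := (cancelL a b).symm
    _ = star (sinv a) 1 := by rw [h]
    _ = sinv a := star_one _
  have sinv_sinv : ∀ a : Hs, sinv (sinv a) = a :=
    fun a => (inv_unique (sinv a) a (sinv_star a)).symm
  have inv_unique' : ∀ a b : Hs, star b a = 1 → b = sinv a := by
    intro a b h
    have := inv_unique b a h
    rw [this, sinv_sinv]
  have sinv_star_rev : ∀ a b : Hs, sinv (star a b) = star (sinv b) (sinv a) := by
    intro a b
    refine (inv_unique _ _ ?_).symm
    rw [star_assoc, ← star_assoc b, star_sinv, one_star, star_sinv]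
  -- gamma lemmas
  have gam_one : ∀ w : G, gammaMap star sinv act w 1 = 1 := by
    intro w; unfold gammaMap; exact sinv_star _
  have gam_hom : ∀ (w : G) (h k : Hs),
      gammaMap star sinv act w (star h k)
        = star (gammaMap star sinv act w h) (gammaMap star sinv act w k) := by
    intro w h k
    unfold gammaMap
    rw [bracoid, ← star_assoc]
  have gam_sinv : ∀ (w : G) (h : Hs),
      gammaMap star sinv act w (sinv h) = sinv (gammaMap star sinv act w h) := by
    intro w h
    refine inv_unique' _ _ ?_
    rw [← gam_hom, sinv_star, gam_one]
  -- act lemmas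
  have act_act_inv : ∀ (g : G) (h : Hs), act g (act g⁻¹ h) = h := by
    intro g h; rw [← mul_act, mul_inv_cancel, one_act]
  have prod : ∀ a b : Hs, (↑a * ↑b : G) = ↑(act (↑a) b) := by
    intro a b
    have h1 : act ((↑a : G) * ↑b) 1 = act (↑a) b := by rw [mul_act, regular]
    have h2 : act ((↑a : G) * ↑b) 1 = ⟨(↑a : G) * ↑b, mul_mem a.2 b.2⟩ :=
      regular ⟨(↑a : G) * ↑b, mul_mem a.2 b.2⟩
    rw [← h1, h2]
  have act_eq : ∀ (a h : Hs), act (↑a) h = star a (gammaMap star sinv act (↑a) h) := by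
    intro a h
    unfold gammaMap
    rw [regular, cancelL']
  -- abbreviations
  set a := lamMap star sinv act x y with ha
  set u : Hs := act (x * y) 1 with hu
  set v : Hs := act (x * y * z) 1 with hv
  have hau : a = star (sinv (act x 1)) u := by
    rw [ha, hu]; unfold lamMap gammaMap; rw [← mul_act]
  have hrho : rhoMap star sinv act y x = (↑a : G)⁻¹ * (x * y) := by
    unfold rhoMap; rw [← ha, mul_assoc]
  have hFρ : act (rhoMap star sinv act y x) 1 = act ((↑a : G)⁻¹) u := by
    rw [hrho, mul_act, hu]
  have hFρz : act (rhoMap star sinv act y x) (act z 1) = act ((↑a : G)⁻¹) v := by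
    rw [hrho, mul_act, hv, mul_act (x*y) z]
  have hlamρ : lamMap star sinv act (rhoMap star sinv act y x) z
      = star (sinv (act ((↑a : G)⁻¹) u)) (act ((↑a : G)⁻¹) v) := by
    unfold lamMap gammaMap
    rw [hFρ, hFρz]
  have γau : gammaMap star sinv act (↑a) (act ((↑a : G)⁻¹) u) = star (sinv a) u := by
    unfold gammaMap; rw [regular, act_act_inv]
  have γav : gammaMap star sinv act (↑a) (act ((↑a : G)⁻¹) v) = star (sinv a) v := by
    unfold gammaMap; rw [regular, act_act_inv]
  have key : lamMap star sinv act x (y * z)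
      = act (↑a) (lamMap star sinv act (rhoMap star sinv act y x) z) := by
    rw [hlamρ, act_eq, gam_hom, gam_sinv, γau, γav, sinv_star_rev, sinv_sinv,
      star_assoc (sinv u), ← star_assoc a (sinv a), star_sinv, one_star, hau,
      star_assoc, cancelL']
    unfold lamMap gammaMap
    rw [← mul_act, ← mul_assoc, ← hv]
  rw [prod a (lamMap star sinv act (rhoMap star sinv act y x) z)]
  exact congrArg _ key
end

section
/- Let (G,·,H,⋆,⊙) be a left skew bracoid containing a brace and define x + y = y · λ_{y⁻¹}(x), where λ_z(w) = (z ⊙ e)⁻ˢᵗᵃʳ ⋆ (z ⊙ (w ⊙ e)). Then + is an associative operation on G. -/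
/-- The operation `x + y = y · λ_{y⁻¹}(x)` is associative on `G`. -/
theorem stmt_12
    {G : Type*} [Group G] (Hs : Subgroup G)
    (star : Hs → Hs → Hs) (sinv : Hs → Hs) (act : G → Hs → Hs)
    (star_assoc : ∀ a b c : Hs, star (star a b) c = star a (star b c))
    (one_star : ∀ a : Hs, star 1 a = a)
    (star_one : ∀ a : Hs, star a 1 = a)
    (sinv_star : ∀ a : Hs, star (sinv a) a = 1)
    (star_sinv : ∀ a : Hs, star a (sinv a) = 1)
    (one_act : ∀ h : Hs, act 1 h = h)
    (mul_act : ∀ (x y : G) (h : Hs), act (x * y) h = act x (act y h))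
    (act_trans : ∀ h k : Hs, ∃ x : G, act x h = k)
    (bracoid : ∀ (x : G) (h k : Hs),
      act x (star h k) = star (act x h) (star (sinv (act x 1)) (act x k)))
    (regular : ∀ h : Hs, act (↑h) 1 = h)
    (x y z : G) :
    (fun a b : G => b * ↑(lamMap star sinv act b⁻¹ a)) ((fun a b : G => b * ↑(lamMap star sinv act b⁻¹ a)) x y) z
      = (fun a b : G => b * ↑(lamMap star sinv act b⁻¹ a)) x ((fun a b : G => b * ↑(lamMap star sinv act b⁻¹ a)) y z) := by
  clear act_trans
  -- basic star lemmas
  have P1 : ∀ a b : Hs, star a (star (sinv a) b) = b := by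
    intro a b; rw [← star_assoc, star_sinv, one_star]
  have P2 : ∀ a b : Hs, star (sinv a) (star a b) = b := by
    intro a b; rw [← star_assoc, sinv_star, one_star]
  have sinv_eq : ∀ q r : Hs, star q r = 1 → sinv q = r := by
    intro q r h
    rw [← star_one (sinv q), ← h, ← star_assoc, sinv_star, one_star]
  have sinv_one : sinv (1 : Hs) = 1 := sinv_eq 1 1 (one_star 1)
  -- act lemmas
  have actinv' : ∀ (g : G) (h : Hs), act g (act g⁻¹ h) = h := by
    intro g h; rw [← mul_act, mul_inv_cancel, one_act]
  have act_coe : ∀ (h k : Hs), act (↑h) k = h * k := by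
    intro h k
    have h1 := regular (h * k)
    rw [Subgroup.coe_mul, mul_act, regular k] at h1
    exact h1
  have act_sinv : ∀ (g : G) (k : Hs),
      act g (sinv k) = star (act g 1) (star (sinv (act g k)) (act g 1)) := by
    intro g k
    have hb := bracoid g k (sinv k)
    rw [star_sinv] at hb
    have h2 : star (sinv (act g k)) (act g 1) = star (sinv (act g 1)) (act g (sinv k)) := by
      conv_lhs => rw [hb]
      exact P2 _ _
    rw [h2, P1]
  have mu_add : ∀ a b : G,
      act (b * ↑(star (sinv (act b⁻¹ 1)) (act b⁻¹ (act a 1)))) 1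
        = star (act b 1) (act a 1) := by
    intro a b
    rw [mul_act, regular, bracoid, actinv', act_sinv, actinv', sinv_one, one_star,
      star_assoc, P1]
  have key : ∀ (w h k : Hs), w * star h k = star (w * h) (star (sinv w) (w * k)) := by
    intro w h k
    have hb := bracoid (↑w) h k
    simp only [act_coe, mul_one] at hb
    exact hb
  have sinv_mul : ∀ w m : Hs, sinv (w * m) = star (sinv w) (star (w * sinv m) (sinv w)) := by
    intro w m
    apply sinv_eq
    have hk := key w m (sinv m)
    rw [star_sinv, mul_one] at hk
    rw [← star_assoc (sinv w) (w * sinv m) (sinv w), ← star_assoc (w*m), ← hk, star_sinv]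
  have main : ∀ (u m a : Hs),
      u⁻¹ * star u (star (sinv m) a) = star (sinv (u⁻¹ * m)) (u⁻¹ * a) := by
    intro u m a
    rw [key u⁻¹ u (star (sinv m) a), inv_mul_cancel, one_star, key u⁻¹ (sinv m) a,
      sinv_mul u⁻¹ m, star_assoc, star_assoc]
  show z * ↑(lamMap star sinv act z⁻¹ (y * ↑(lamMap star sinv act y⁻¹ x)))
      = (z * ↑(lamMap star sinv act z⁻¹ y))
        * ↑(lamMap star sinv act (z * ↑(lamMap star sinv act z⁻¹ y))⁻¹ x)
  simp only [lamMap, gammaMap]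
  rw [mu_add x y, bracoid z⁻¹ (act y 1) (act x 1),
    ← star_assoc (sinv (act z⁻¹ 1)) (act z⁻¹ (act y 1)),
    mul_inv_rev, ← Subgroup.coe_inv]
  simp only [mul_act, act_coe]
  rw [← main (star (sinv (act z⁻¹ 1)) (act z⁻¹ (act y 1))) (act z⁻¹ 1) (act z⁻¹ (act x 1))]
  push_cast
  group
end

section
/- Let (G,·,H,⋆,⊙) be a left skew bracoid containing a brace and define x + y = y · λ_{y⁻¹}(x). Then the triple (G,+,·) satisfies the left semibrace relation x·(y+z) = x·y + x·(x⁻¹+z) for all x,y,z ∈ G. -/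
/-- With `x + y = y · λ_{y⁻¹}(x)`, the triple `(G,+,·)` satisfies the left
semibrace relation `x·(y+z) = x·y + x·(x⁻¹+z)`. -/
theorem stmt_14
    {G : Type*} [Group G] (Hs : Subgroup G)
    (star : Hs → Hs → Hs) (sinv : Hs → Hs) (act : G → Hs → Hs)
    (star_assoc : ∀ a b c : Hs, star (star a b) c = star a (star b c))
    (one_star : ∀ a : Hs, star 1 a = a)
    (star_one : ∀ a : Hs, star a 1 = a)
    (sinv_star : ∀ a : Hs, star (sinv a) a = 1)
    (star_sinv : ∀ a : Hs, star a (sinv a) = 1)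
    (one_act : ∀ h : Hs, act 1 h = h)
    (mul_act : ∀ (x y : G) (h : Hs), act (x * y) h = act x (act y h))
    (act_trans : ∀ h k : Hs, ∃ x : G, act x h = k)
    (bracoid : ∀ (x : G) (h k : Hs),
      act x (star h k) = star (act x h) (star (sinv (act x 1)) (act x k)))
    (regular : ∀ h : Hs, act (↑h) 1 = h)
    (x y z : G) :
    x * (z * ↑(lamMap star sinv act z⁻¹ y))
      = (x * (z * ↑(lamMap star sinv act z⁻¹ x⁻¹)))
        * ↑(lamMap star sinv act (x * (z * ↑(lamMap star sinv act z⁻¹ x⁻¹)))⁻¹ (x * y)) := by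
  -- basic star-group lemma: X ⋆ Y = 1 → X = sinv Y
  have eq_sinv_of : ∀ X Y : Hs, star X Y = 1 → X = sinv Y := by
    intro X Y hXY
    calc X = star X 1 := (star_one X).symm
    _ = star X (star Y (sinv Y)) := by rw [star_sinv]
    _ = star (star X Y) (sinv Y) := (star_assoc _ _ _).symm
    _ = sinv Y := by rw [hXY, one_star]
  have inv_act : ∀ (g : G) (h : Hs), act g⁻¹ (act g h) = h := by
    intro g h
    rw [← mul_act, inv_mul_cancel, one_act]
  -- action on sinv
  have act_sinv : ∀ (g : G) (h : Hs),
      act g (sinv h) = star (act g 1) (star (sinv (act g h)) (act g 1)) := by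
    intro g h
    have h1 : act g (star h (sinv h)) = act g 1 := by rw [star_sinv]
    rw [bracoid] at h1
    -- act g h ⋆ (sinv (act g 1) ⋆ act g (sinv h)) = act g 1
    have h2 : star (sinv (act g 1)) (act g (sinv h))
        = star (sinv (act g h)) (act g 1) := by
      calc star (sinv (act g 1)) (act g (sinv h))
          = star 1 (star (sinv (act g 1)) (act g (sinv h))) := (one_star _).symm
      _ = star (star (sinv (act g h)) (act g h))
            (star (sinv (act g 1)) (act g (sinv h))) := by rw [sinv_star]
      _ = star (sinv (act g h)) (star (act g h)
            (star (sinv (act g 1)) (act g (sinv h)))) := star_assoc _ _ _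
      _ = star (sinv (act g h)) (act g 1) := by rw [h1]
    calc act g (sinv h) = star 1 (act g (sinv h)) := (one_star _).symm
    _ = star (star (act g 1) (sinv (act g 1))) (act g (sinv h)) := by rw [star_sinv]
    _ = star (act g 1) (star (sinv (act g 1)) (act g (sinv h))) := star_assoc _ _ _
    _ = star (act g 1) (star (sinv (act g h)) (act g 1)) := by rw [h2]
  have act_sinv_star : ∀ (g : G) (h k : Hs),
      act g (star (sinv h) k)
        = star (act g 1) (star (sinv (act g h)) (act g k)) := by
    intro g h k
    rw [bracoid, act_sinv]
    rw [star_assoc, star_assoc]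
    congr 1
    rw [← star_assoc (act g 1) (sinv (act g 1)) (act g k), star_sinv, one_star]
  -- multiplication in Hs is given by the action
  have mul_eq_act : ∀ h k : Hs, h * k = act (↑h) k := by
    intro h k
    have h1 := regular (h * k)
    have h2 : act (↑(h * k) : G) (1 : Hs) = act (↑h) k := by
      push_cast
      rw [mul_act, regular]
    rw [h2] at h1
    exact h1.symm
  -- abbreviations
  set p : Hs := lamMap star sinv act z⁻¹ x⁻¹ with hp
  set q : Hs := lamMap star sinv act z⁻¹ y with hq
  set u : G := (↑p : G)⁻¹ with hu
  set A : Hs := act z⁻¹ 1 with hA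
  set B : Hs := act z⁻¹ (act x⁻¹ 1) with hB
  set C : Hs := act z⁻¹ (act y 1) with hC
  have hpdef : p = star (sinv A) B := rfl
  have hqdef : q = star (sinv A) C := rfl
  have hau : act u 1 = p⁻¹ := by
    have : ((p⁻¹ : Hs) : G) = u := by rw [hu]; push_cast; rfl
    rw [← this]; exact regular p⁻¹
  have haup : act u p = 1 := by
    have h1 : act (u * ↑p) 1 = act u (act (↑p) 1) := mul_act _ _ _
    rw [regular] at h1
    rw [hu] at h1 ⊢
    rw [inv_mul_cancel, one_act] at h1
    exact h1.symm
  -- key cancellation: p⁻¹ ⋆ sinv (act u A) = sinv (act u B)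
  have hkey : star (p⁻¹ : Hs) (sinv (act u A)) = sinv (act u B) := by
    apply eq_sinv_of
    rw [star_assoc]
    rw [← hau, ← act_sinv_star, ← hpdef, haup]
  -- the coerced w and its action
  set w : G := x * (z * (↑p : G)) with hw
  have hwact : ∀ h : Hs, act w⁻¹ h = act u (act z⁻¹ (act x⁻¹ h)) := by
    intro h
    have : w⁻¹ = u * (z⁻¹ * x⁻¹) := by rw [hw, hu]; group
    rw [this, mul_act, mul_act]
  have hL : lamMap star sinv act w⁻¹ (x * y) = star (sinv (act u B)) (act u C) := by
    unfold lamMap gammaMap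
    rw [hwact, hwact, mul_act, inv_act, ← hB, ← hC]
  have hmain : lamMap star sinv act w⁻¹ (x * y) = p⁻¹ * q := by
    rw [hL, mul_eq_act]
    have hcoe : ((p⁻¹ : Hs) : G) = u := by rw [hu]; push_cast; rfl
    rw [hcoe, hqdef, act_sinv_star, hau, ← star_assoc, hkey]
  calc x * (z * ↑q) = w * ((↑p : G)⁻¹ * ↑q) := by rw [hw]; group
  _ = w * ↑(lamMap star sinv act w⁻¹ (x * y)) := by rw [hmain]; push_cast; rfl
end

section
/- Let (G,·,H,⋆,⊙) be a left skew bracoid containing a brace and define x + y = y·λ_{y⁻¹}(x). Then for x ∈ G, x + x = x if and only if x ⊙ e = e; that is, the idempotents of (G,+) are exactly the stabilizer Stab_G(e). -/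
/-- With `x + y = y · λ_{y⁻¹}(x)`, the idempotents of `(G,+)` are exactly the
stabilizer of `e`: `x + x = x ↔ x ⊙ e = e`. -/
theorem stmt_15
    {G : Type*} [Group G] (Hs : Subgroup G)
    (star : Hs → Hs → Hs) (sinv : Hs → Hs) (act : G → Hs → Hs)
    (star_assoc : ∀ a b c : Hs, star (star a b) c = star a (star b c))
    (one_star : ∀ a : Hs, star 1 a = a)
    (star_one : ∀ a : Hs, star a 1 = a)
    (sinv_star : ∀ a : Hs, star (sinv a) a = 1)
    (star_sinv : ∀ a : Hs, star a (sinv a) = 1)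
    (one_act : ∀ h : Hs, act 1 h = h)
    (mul_act : ∀ (x y : G) (h : Hs), act (x * y) h = act x (act y h))
    (act_trans : ∀ h k : Hs, ∃ x : G, act x h = k)
    (bracoid : ∀ (x : G) (h k : Hs),
      act x (star h k) = star (act x h) (star (sinv (act x 1)) (act x k)))
    (regular : ∀ h : Hs, act (↑h) 1 = h)
    (x : G) :
    x * ↑(lamMap star sinv act x⁻¹ x) = x ↔ act x (1 : Hs) = 1 := by
  have hlam : lamMap star sinv act x⁻¹ x = sinv (act x⁻¹ 1) := by
    unfold lamMap gammaMap
    rw [← mul_act, inv_mul_cancel, one_act, star_one]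
  rw [hlam]
  constructor
  · intro h
    have h1 : (↑(sinv (act x⁻¹ 1)) : G) = 1 := by
      have := mul_left_cancel (a := x) (b := ↑(sinv (act x⁻¹ 1))) (c := 1)
      exact this (by simpa using h)
    have h2 : sinv (act x⁻¹ 1) = 1 := Subtype.ext h1
    have h3 : act x⁻¹ 1 = 1 := by
      have := sinv_star (act x⁻¹ 1)
      rw [h2, one_star] at this
      exact this
    calc act x 1 = act x (act x⁻¹ 1) := by rw [h3]
      _ = act (x * x⁻¹) 1 := (mul_act _ _ _).symm
      _ = 1 := by rw [mul_inv_cancel, one_act]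
  · intro h
    have h3 : act x⁻¹ 1 = 1 := by
      calc act x⁻¹ 1 = act x⁻¹ (act x 1) := by rw [h]
        _ = act (x⁻¹ * x) 1 := (mul_act _ _ _).symm
        _ = 1 := by rw [inv_mul_cancel, one_act]
    have h2 : sinv (act x⁻¹ 1) = 1 := by
      have := star_sinv (1 : Hs)
      rw [one_star] at this
      rw [h3, this]
    rw [h2]
    simp
end

section
/- Let (G,+,·) be a left semibrace with H = G + e being a subgroup of (G,·) on which + restricts to a group operation, and suppose e + y = y for all y ∈ G. Define h ⋆ k = k + h on H and x ⊙ h = x·h + e for x ∈ G, h ∈ H. Then x ⊙ (h ⋆ k) = (x ⊙ h) ⋆ (x ⊙ e)⁻ˢᵗᵃʳ ⋆ (x ⊙ k) for all x ∈ G and h,k ∈ H, i.e., the skew bracoid relation holds. -/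
/-- Let `(G,+,·)` be a left semibrace with `H = G + e` a subgroup of `(G,·)` on
which `+` restricts to a group operation (with identity `e` and `⋆`-inversion
`sinv`), and suppose `e + y = y` for all `y`. With `h ⋆ k = k + h` and
`x ⊙ h = x·h + e`, the skew bracoid relation
`x ⊙ (h ⋆ k) = (x ⊙ h) ⋆ ((x ⊙ e)⁻ˢᵗᵃʳ ⋆ (x ⊙ k))` holds for all `x ∈ G` and
`h, k ∈ H`. -/
theorem stmt_16 {G : Type*} [Group G] (add : G → G → G)
    (add_assoc : ∀ x y z : G, add (add x y) z = add x (add y z))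
    (left_cancel : ∀ x y z : G, add x y = add x z → y = z)
    (semibrace : ∀ x y z : G, x * add y z = add (x * y) (x * add x⁻¹ z))
    (Hset : Set G) (hHset : Hset = {g : G | ∃ a : G, g = add a 1})
    (hHsub : ∃ Hs : Subgroup G, (Hs : Set G) = Hset)
    (hHadd : ∀ h k : G, h ∈ Hset → k ∈ Hset → add h k ∈ Hset)
    (hHone : ∀ h ∈ Hset, add h 1 = h)
    (sinv : G → G) (hsinv_mem : ∀ h ∈ Hset, sinv h ∈ Hset)
    (hsinv_left : ∀ h ∈ Hset, add h (sinv h) = 1)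
    (hsinv_right : ∀ h ∈ Hset, add (sinv h) h = 1)
    (hone_add : ∀ y : G, add 1 y = y) :
    ∀ x : G, ∀ h ∈ Hset, ∀ k ∈ Hset,
      add (x * add k h) 1
        = add (add (add (x * k) 1) (sinv (add (x * 1) 1))) (add (x * h) 1) := by
  intro x h hh k hk
  have hx1 : add x 1 ∈ Hset := by rw [hHset]; exact ⟨x, rfl⟩
  have hsx1 : add (sinv (add x 1)) (add x 1) = 1 := hsinv_right _ hx1
  have hu1 : add (add (sinv (add x 1)) x) 1 = 1 := by rw [add_assoc]; exact hsx1
  have hxh : x * h = add x (x * add x⁻¹ h) := by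
    have := semibrace x 1 h
    rwa [hone_add, mul_one] at this
  have key : ∀ W : G, add (add (sinv (add x 1)) x) W = W := by
    intro W
    have h1 : add (add (add (sinv (add x 1)) x) 1) W
        = add (add (sinv (add x 1)) x) W := by
      rw [add_assoc, hone_add]
    rw [hu1, hone_add] at h1
    exact h1.symm
  calc add (x * add k h) 1
      = add (add (x * k) (x * add x⁻¹ h)) 1 := by rw [semibrace x k h]
    _ = add (x * k) (add (x * add x⁻¹ h) 1) := add_assoc _ _ _
    _ = add (x * k) (add (add (sinv (add x 1)) x) (add (x * add x⁻¹ h) 1)) := by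
        rw [key]
    _ = add (x * k) (add (sinv (add x 1)) (add x (add (x * add x⁻¹ h) 1))) := by
        rw [add_assoc]
    _ = add (x * k) (add (sinv (add x 1)) (add (add x (x * add x⁻¹ h)) 1)) := by
        rw [add_assoc]
    _ = add (x * k) (add (sinv (add x 1)) (add (x * h) 1)) := by rw [hxh]
    _ = add (x * k) (add 1 (add (sinv (add x 1)) (add (x * h) 1))) := by
        rw [hone_add]
    _ = add (add (x * k) 1) (add (sinv (add x 1)) (add (x * h) 1)) :=
        (add_assoc _ _ _).symm
    _ = add (add (add (x * k) 1) (sinv (add x 1))) (add (x * h) 1) :=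
        (add_assoc _ _ _).symm
    _ = add (add (add (x * k) 1) (sinv (add (x * 1) 1))) (add (x * h) 1) := by
        rw [mul_one]
end

section
/- Let (G,+,·) be a left semibrace, and define x ⊙ h = x·h + e for x ∈ G and h ∈ H := G + e. Then ⊙ is a left action of the group (G,·) on the set H: e ⊙ h = h and x ⊙ (y ⊙ h) = (x·y) ⊙ h for all x,y ∈ G and h ∈ H, assuming h + e = h for all h ∈ H. -/
/-- Let `(G,+,·)` be a left semibrace and define `x ⊙ h = x·h + e` for
`h ∈ H := G + e`. Assuming `h + e = h` for all `h ∈ H`, `⊙` is a left action of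
the group `(G,·)` on `H`: `e ⊙ h = h` and `x ⊙ (y ⊙ h) = (x·y) ⊙ h`. -/
theorem stmt_17 {G : Type*} [Group G] (add : G → G → G)
    (add_assoc : ∀ x y z : G, add (add x y) z = add x (add y z))
    (left_cancel : ∀ x y z : G, add x y = add x z → y = z)
    (semibrace : ∀ x y z : G, x * add y z = add (x * y) (x * add x⁻¹ z))
    (Hset : Set G) (hHset : Hset = {g : G | ∃ a : G, g = add a 1})
    (hHone : ∀ h ∈ Hset, add h 1 = h) :
    ∀ h ∈ Hset, add ((1 : G) * h) 1 = h ∧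
      ∀ x y : G, add (x * add (y * h) 1) 1 = add ((x * y) * h) 1 := by
  -- add 1 z = z for all z
  have hone : ∀ z : G, add 1 z = z := by
    intro z
    have := semibrace 1 1 z
    simp at this
    exact left_cancel 1 _ _ this.symm
  -- add (x * add x⁻¹ 1) 1 = 1
  have key : ∀ x : G, add (x * add x⁻¹ 1) 1 = 1 := by
    intro x
    have h1 : x * add x⁻¹ 1 = add (x * x⁻¹) (x * add x⁻¹ 1) := semibrace x x⁻¹ 1
    rw [mul_inv_cancel, hone] at h1
    -- instead use s = add x⁻¹ 1 with add s 1 = s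
    have hs : add (add x⁻¹ 1) 1 = add x⁻¹ 1 := by
      rw [add_assoc, hone]
    have h2 : x * add (add x⁻¹ 1) 1 = add (x * add x⁻¹ 1) (x * add x⁻¹ 1) :=
      semibrace x (add x⁻¹ 1) 1
    rw [hs] at h2
    -- w = add w w where w = x * add x⁻¹ 1
    set w := x * add x⁻¹ 1 with hw
    have h3 : add w 1 = add w (add w 1) := by
      conv_lhs => rw [h2, add_assoc]
    exact (left_cancel w _ _ h3).symm
  intro h hh
  refine ⟨by rw [one_mul]; exact hHone h hh, ?_⟩
  intro x y
  have h4 : x * add (y * h) 1 = add (x * (y * h)) (x * add x⁻¹ 1) :=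
    semibrace x (y * h) 1
  rw [h4, add_assoc, key, ← mul_assoc]
end

section
/- Let (G,·,H,⋆,⊙) be a left skew bracoid containing a brace, with λ_x(y) = (x ⊙ e)⁻ˢᵗᵃʳ ⋆ (x ⊙ (y ⊙ e)) and ρ_y(x) = λ_x(y)⁻¹·x·y. Then the map r : G × G → G × G defined by r(x,y) = (ρ_{x⁻¹}(y⁻¹)⁻¹, λ_{y⁻¹}(x⁻¹)⁻¹) satisfies the set-theoretic Yang–Baxter equation: (r × id)(id × r)(r × id) = (id × r)(r × id)(id × r) on G × G × G. -/
/-- The map `r12` acting on the first two factors of `G × G × G`. -/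
def ybeR12 {G : Type*} (r : G × G → G × G) : G × G × G → G × G × G :=
  fun p => ((r (p.1, p.2.1)).1, (r (p.1, p.2.1)).2, p.2.2)

/-- The map `r23` acting on the last two factors of `G × G × G`. -/
def ybeR23 {G : Type*} (r : G × G → G × G) : G × G × G → G × G × G :=
  fun p => (p.1, r p.2)

/-- `r` satisfies the set-theoretic Yang--Baxter equation. -/
def IsYBE {G : Type*} (r : G × G → G × G) : Prop :=
  ybeR12 r ∘ ybeR23 r ∘ ybeR12 r = ybeR23 r ∘ ybeR12 r ∘ ybeR23 r

/-- For a bracoid containing a brace, the map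
`r(x,y) = (ρ_{x⁻¹}(y⁻¹)⁻¹, λ_{y⁻¹}(x⁻¹)⁻¹)` satisfies the set-theoretic
Yang--Baxter equation. -/
theorem stmt_18
    {G : Type*} [Group G] (Hs : Subgroup G)
    (star : Hs → Hs → Hs) (sinv : Hs → Hs) (act : G → Hs → Hs)
    (star_assoc : ∀ a b c : Hs, star (star a b) c = star a (star b c))
    (one_star : ∀ a : Hs, star 1 a = a)
    (star_one : ∀ a : Hs, star a 1 = a)
    (sinv_star : ∀ a : Hs, star (sinv a) a = 1)
    (star_sinv : ∀ a : Hs, star a (sinv a) = 1)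
    (one_act : ∀ h : Hs, act 1 h = h)
    (mul_act : ∀ (x y : G) (h : Hs), act (x * y) h = act x (act y h))
    (act_trans : ∀ h k : Hs, ∃ x : G, act x h = k)
    (bracoid : ∀ (x : G) (h k : Hs),
      act x (star h k) = star (act x h) (star (sinv (act x 1)) (act x k)))
    (regular : ∀ h : Hs, act (↑h) 1 = h)
    :
    IsYBE (fun p : G × G =>
      ((rhoMap star sinv act p.1⁻¹ p.2⁻¹)⁻¹,
        (↑(lamMap star sinv act p.2⁻¹ p.1⁻¹) : G)⁻¹)) := by
  set Γ := gammaMap star sinv act with hΓ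
  set L := lamMap star sinv act with hL
  set R := rhoMap star sinv act with hR
  have gam_def : ∀ (x : G) (h : Hs), Γ x h = star (sinv (act x 1)) (act x h) :=
    fun x h => by rw [hΓ]; rfl
  have lam_def : ∀ x y : G, L x y = Γ x (act y 1) := fun x y => by rw [hL, hΓ]; rfl
  have rho_def : ∀ y x : G, R y x = (↑(L x y) : G)⁻¹ * x * y := fun y x => by
    rw [hR, hL]; rfl
  -- star group basics
  have star_sinv_cancel : ∀ a b : Hs, star a (star (sinv a) b) = b := fun a b => by
    rw [← star_assoc, star_sinv, one_star]
  have sinv_star_cancel : ∀ a b : Hs, star (sinv a) (star a b) = b := fun a b => by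
    rw [← star_assoc, sinv_star, one_star]
  have inv_unique : ∀ a b : Hs, star a b = 1 → b = sinv a := fun a b h => by
    have h2 := congrArg (star (sinv a)) h
    rwa [← star_assoc, sinv_star, one_star, star_one] at h2
  have sinv_sinv : ∀ a : Hs, sinv (sinv a) = a :=
    fun a => (inv_unique (sinv a) a (sinv_star a)).symm
  have sinv_one : sinv (1 : Hs) = 1 := by
    have h := sinv_star (1 : Hs); rwa [star_one] at h
  have sinv_star' : ∀ a b : Hs, sinv (star a b) = star (sinv b) (sinv a) := fun a b =>
    (inv_unique _ _ (by rw [star_assoc, star_sinv_cancel, star_sinv])).symm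
  -- action basics
  have act_invG : ∀ (x : G) (h : Hs), act x⁻¹ (act x h) = h := fun x h => by
    rw [← mul_act, inv_mul_cancel, one_act]
  have act_invG' : ∀ (x : G) (h : Hs), act x (act x⁻¹ h) = h := fun x h => by
    rw [← mul_act, mul_inv_cancel, one_act]
  -- gamma lemmas
  have gam_star : ∀ (x : G) (h k : Hs),
      Γ x (star h k) = star (Γ x h) (Γ x k) := fun x h k => by
    simp only [gam_def, bracoid, star_assoc]
  have gam_one : ∀ x : G, Γ x 1 = 1 := fun x => by
    rw [gam_def]; exact sinv_star _
  have gam_sinv : ∀ (x : G) (h : Hs), Γ x (sinv h) = sinv (Γ x h) := fun x h =>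
    inv_unique _ _ (by rw [← gam_star, star_sinv, gam_one])
  have gam_id : ∀ h : Hs, Γ 1 h = h := fun h => by
    simp only [gam_def, one_act, sinv_one, one_star]
  have gam_mul : ∀ (x y : G) (h : Hs), Γ (x * y) h = Γ x (Γ y h) := fun x y h => by
    conv_rhs => rw [gam_def y h]
    rw [gam_star, gam_sinv]
    simp only [gam_def, mul_act, sinv_star', sinv_sinv, star_assoc, star_sinv_cancel,
      sinv_star_cancel]
  have gam_cancel : ∀ (x : G) (h : Hs), Γ x (Γ x⁻¹ h) = h := fun x h => by
    rw [← gam_mul, mul_inv_cancel, gam_id]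
  have gam_cancel' : ∀ (x : G) (h : Hs), Γ x⁻¹ (Γ x h) = h := fun x h => by
    rw [← gam_mul, inv_mul_cancel, gam_id]
  have act_coe : ∀ (h k : Hs), act (↑h) k = star h (Γ (↑h) k) := fun h k => by
    simp only [gam_def, regular, star_sinv_cancel]
  -- lam / rho lemmas
  have lam_coe : ∀ (x : G) (h : Hs), L x ↑h = Γ x h := fun x h => by
    rw [lam_def, regular]
  have lam_rho : ∀ x y : G, (↑(L x y) : G) * R y x = x * y := fun x y => by
    rw [rho_def]; group
  have lamE : ∀ x y z : G, L x ↑(L y z) = L (x * y) z := fun x y z => by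
    rw [lam_coe, lam_def y z, ← gam_mul, ← lam_def]
  have lamE2 : ∀ x y z : G,
      L ↑(L x y) ↑(L (R y x) z) = L (x * y) z := fun x y z => by
    rw [lam_coe, lam_def (R y x) z, ← gam_mul, lam_rho, ← lam_def]
  have hc : ∀ x y z : G, Γ x (L y z) = L (x * y) z := fun x y z => by
    rw [lam_def y z, ← gam_mul, ← lam_def]
  -- the key coercion/injectivity tools
  have coe_eq : ∀ u v : Hs, act ↑u 1 = act ↑v 1 → (↑u : G) = ↑v := fun u v h => by
    rw [regular, regular] at h
    exact congrArg _ h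
  have coe_inv : ∀ c : Hs, ((c⁻¹ : Hs) : G) = (↑c)⁻¹ := fun c => rfl
  have gam_inv_self : ∀ c : Hs, Γ ((↑c : G))⁻¹ c = sinv (c⁻¹) := fun c => by
    have h1 : act ((↑c : G))⁻¹ 1 = c⁻¹ := by
      have h := regular c⁻¹
      rwa [coe_inv] at h
    have h2 : act ((↑c : G))⁻¹ c = 1 := by
      have h := act_invG (↑c : G) 1
      rwa [regular] at h
    rw [gam_def, h1, h2, star_one]
  have dagger : ∀ a c : Hs,
      (↑(Γ ((↑c : G))⁻¹ (star (sinv c) (star a c))) : G)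
        = (↑c : G)⁻¹ * ↑a * ↑(Γ ((↑a : G))⁻¹ c) := by
    intro a c
    have hv : (↑c : G)⁻¹ * ↑a * ↑(Γ ((↑a : G))⁻¹ c)
        = ↑(c⁻¹ * a * Γ ((↑a : G))⁻¹ c) := by
      push_cast
      rfl
    rw [hv]
    apply coe_eq
    rw [regular, regular]
    -- compute the right hand side
    have hmul : ((c⁻¹ * a * Γ ((↑a : G))⁻¹ c : Hs) : G)
        = (↑c : G)⁻¹ * (↑a * ↑(Γ ((↑a : G))⁻¹ c)) := by push_cast; group
    have hR1 : act ((↑a : G)) (Γ ((↑a : G))⁻¹ c) = star a c := by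
      rw [act_coe, gam_cancel]
    calc Γ ((↑c : G))⁻¹ (star (sinv c) (star a c))
        = star c⁻¹ (Γ ((↑c : G))⁻¹ (star a c)) := by
          rw [gam_star, gam_sinv, gam_inv_self, sinv_sinv]
      _ = act ((↑c : G))⁻¹ (star a c) := by
          rw [← coe_inv, act_coe c⁻¹, coe_inv]
      _ = c⁻¹ * a * Γ ((↑a : G))⁻¹ c := by
          conv_rhs => rw [← regular (c⁻¹ * a * Γ ((↑a : G))⁻¹ c)]
          rw [hmul, mul_act, mul_act, regular, hR1]
  -- E2 : equality of middle components
  have E2 : ∀ x y z : G,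
      R ↑(L (R y x) z) ↑(L x y) = ↑(L (R ↑(L y z) x) (R z y)) := by
    intro x y z
    have hgab : Γ ↑(L x y) (L (R y x) z) = L (x * y) z := by
      rw [← lam_coe]; exact lamE2 x y z
    have hb : L (R y x) z = Γ ((↑(L x y) : G))⁻¹ (L (x * y) z) := by
      rw [← hgab, gam_cancel']
    have hLHS : R ↑(L (R y x) z) ↑(L x y)
        = (↑(L (x * y) z) : G)⁻¹ * ↑(L x y) * ↑(L (R y x) z) := by
      rw [rho_def, lamE2]
    have hRdx : R ↑(L y z) x = (↑(L (x * y) z) : G)⁻¹ * x * ↑(L y z) := by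
      rw [rho_def, lamE]
    have hRzy : R z y = (↑(L y z) : G)⁻¹ * y * z := rho_def z y
    have key1 : ∀ m : Hs, Γ (↑(L y z) : G) (act ((↑(L y z) : G))⁻¹ m)
        = star (sinv (L y z)) m := fun m => by
      rw [gam_def, regular, act_invG']
    have hw : act y (act z 1) = star (act y 1) (L y z) := by
      rw [lam_def, gam_def, star_sinv_cancel]
    have hRHS : L (R ↑(L y z) x) (R z y)
        = Γ ((↑(L (x * y) z) : G))⁻¹
            (star (sinv (L (x * y) z)) (star (L x y) (L (x * y) z))) := by
      rw [lam_def, hRdx, hRzy]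
      simp only [mul_act, gam_mul]
      rw [key1, hw]
      congr 1
      rw [gam_star, gam_sinv, gam_star, hc x y z, ← lam_def]
    rw [hLHS, hRHS, dagger (L x y) (L (x * y) z), ← hb]
  -- E3 : equality of last components
  have E3 : ∀ x y z : G,
      R z (R y x) = R (R z y) (R ↑(L y z) x) := by
    intro x y z
    rw [rho_def z (R y x), rho_def (R z y) (R ↑(L y z) x), ← E2 x y z,
      rho_def (↑(L (R y x) z) : G) (↑(L x y) : G), lamE2 x y z,
      rho_def y x, rho_def (↑(L y z) : G) x, rho_def z y, lamE x y z]
    group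
  -- assemble the Yang--Baxter equation
  unfold IsYBE ybeR12 ybeR23
  funext p
  obtain ⟨x, y, z⟩ := p
  simp only [Function.comp_apply, inv_inv]
  rw [E3 z⁻¹ y⁻¹ x⁻¹, E2 z⁻¹ y⁻¹ x⁻¹, lamE z⁻¹ y⁻¹ x⁻¹, lamE2 z⁻¹ y⁻¹ x⁻¹]
end
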